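/- For n ≥ p ≥ 1 natural numbers, the following chain of inequalities holds: ∑_{i=1}^{p} log(n - i + 1) ≤ ∑_{i=1}^{p} log(n + p - 2i + 1) ≤ p * log n. -/
import Mathlib

lemma icc_id_sum (p : ℕ) : (∑ i ∈ Finset.Icc 1 p, (i : ℝ)) = p * (p + 1) / 2 := by
  induction p with
  | zero => simp
  | succ q ih =>
    rw [Finset.sum_Icc_succ_top (by omega), ih]
    push_cast
    ring

theorem stmt_4 (n p : ℕ) (hp : 1 ≤ p) (hpn : p ≤ n) :
    (∑ i ∈ Finset.Icc 1 p, Real.log ((n : ℝ) - i + 1)) ≤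
        (∑ i ∈ Finset.Icc 1 p, Real.log ((n : ℝ) + p - 2 * i + 1)) ∧
      (∑ i ∈ Finset.Icc 1 p, Real.log ((n : ℝ) + p - 2 * i + 1)) ≤
        p * Real.log n := by
  have hn1 : 1 ≤ n := hp.trans hpn
  have hnR : (1 : ℝ) ≤ (n : ℝ) := by exact_mod_cast hn1
  have hpnR : (p : ℝ) ≤ (n : ℝ) := by exact_mod_cast hpn
  have hpos : ∀ i ∈ Finset.Icc 1 p, (0 : ℝ) < (n : ℝ) + p - 2 * i + 1 := by
    intro i hi
    simp only [Finset.mem_Icc] at hi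
    have hiR : (i : ℝ) ≤ (p : ℝ) := by exact_mod_cast hi.2
    linarith
  constructor
  · apply Finset.sum_le_sum
    intro i hi
    simp only [Finset.mem_Icc] at hi
    have hiR : (i : ℝ) ≤ (p : ℝ) := by exact_mod_cast hi.2
    have h0 : (0 : ℝ) < (n : ℝ) - i + 1 := by linarith
    exact Real.log_le_log h0 (by linarith)
  · have hsum : (∑ i ∈ Finset.Icc 1 p, ((n : ℝ) + p - 2 * i + 1)) = p * n := by
      have h1 : ∀ i ∈ Finset.Icc 1 p, ((n : ℝ) + p - 2 * i + 1)
          = ((n : ℝ) + p + 1) - 2 * i := by intro i _; ring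
      rw [Finset.sum_congr rfl h1, Finset.sum_sub_distrib, Finset.sum_const,
        ← Finset.mul_sum, icc_id_sum, Nat.card_Icc, nsmul_eq_mul]
      have : ((p + 1 - 1 : ℕ) : ℝ) = (p : ℝ) := by
        push_cast [Nat.add_sub_cancel]
        rfl
      rw [this]
      ring
    have hnpos : (0 : ℝ) < (n : ℝ) := by linarith
    have key : ∀ i ∈ Finset.Icc 1 p, Real.log ((n : ℝ) + p - 2 * i + 1)
        ≤ Real.log n + (((n : ℝ) + p - 2 * i + 1) / n - 1) := by
      intro i hi
      have ha := hpos i hi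
      have hdiv : (0 : ℝ) < ((n : ℝ) + p - 2 * i + 1) / n := by positivity
      have h1 := Real.log_le_sub_one_of_pos hdiv
      rw [Real.log_div (ne_of_gt ha) (ne_of_gt hnpos)] at h1
      linarith
    calc (∑ i ∈ Finset.Icc 1 p, Real.log ((n : ℝ) + p - 2 * i + 1))
        ≤ ∑ i ∈ Finset.Icc 1 p, (Real.log n + (((n : ℝ) + p - 2 * i + 1) / n - 1)) :=
          Finset.sum_le_sum key
      _ = (Finset.Icc 1 p).card * Real.log n
          + ((∑ i ∈ Finset.Icc 1 p, ((n : ℝ) + p - 2 * i + 1)) / n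
            - (Finset.Icc 1 p).card) := by
          rw [Finset.sum_add_distrib, Finset.sum_const, Finset.sum_sub_distrib,
            Finset.sum_const, ← Finset.sum_div]
          simp [mul_comm]
      _ = p * Real.log n := by
          rw [hsum, Nat.card_Icc, mul_div_assoc, div_self (ne_of_gt hnpos)]
          push_cast [Nat.add_sub_cancel]
          ring
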